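/- Let z be a complex number with Im z > 0 and let m be a complex number with Im m > 0 satisfying m^2 + z*m + 1 = 0. Then |m| ≤ 1. -/

import Mathlib

/-! Solving the equation for `z` gives `z = -1/m - m`, and `Im (-1/m) = Im m / |m|²`.
So `0 < Im z = Im m (1/|m|² - 1)`, which with `Im m > 0` forces `|m| < 1`. -/

namespace Complex

theorem eq_neg_inv_sub_of_sq_add_mul_add_one_eq_zero {z m : ℂ} (heq : m ^ 2 + z * m + 1 = 0) :
    z = -m⁻¹ - m := by
  have hm0 : m ≠ 0 := by
    rintro rfl
    simp at heq
  field_simp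
  linear_combination heq

theorem im_neg_inv (m : ℂ) : (-m⁻¹).im = m.im / normSq m := by
  simp [inv_im, neg_div]

theorem norm_lt_one_of_im_lt_im_neg_inv {m : ℂ} (hm : 0 < m.im) (h : m.im < (-m⁻¹).im) :
    ‖m‖ < 1 := by
  have hm0 : m ≠ 0 := fun h0 => by simp [h0] at hm
  rw [im_neg_inv, lt_div_iff₀ (normSq_pos.mpr hm0)] at h
  have hnormSq : ‖m‖ ^ 2 < 1 := by
    rw [← normSq_eq_norm_sq]
    exact (mul_lt_iff_lt_one_right hm).mp h
  exact (sq_lt_one_iff₀ (norm_nonneg m)).mp hnormSq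

end Complex

/-- If `Im z > 0`, `Im m > 0` and `m² + z m + 1 = 0` then `|m| ≤ 1`. -/
theorem stmt_1 (z m : ℂ) (hz : 0 < z.im) (hm : 0 < m.im)
    (heq : m ^ 2 + z * m + 1 = 0) :
    ‖m‖ ≤ 1 := by
  have him : z.im = (-m⁻¹).im - m.im := by
    rw [Complex.eq_neg_inv_sub_of_sq_add_mul_add_one_eq_zero heq, Complex.sub_im]
  exact (Complex.norm_lt_one_of_im_lt_im_neg_inv hm (by linarith)).le
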